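/- For every integer n ≥ 1 and every t > 0, the sub-leading coefficient p(n,t) of P_n(x;t) is differentiable in t and satisfies t · (d/dt) p(n,t) = r_n(t). -/

import Mathlib

open MeasureTheory Real Filter

/-- The singularly perturbed Laguerre-type weight `w(x;t) = x^λ e^{-x² - t/x}` on `(0,∞)`. -/
noncomputable def weight (lam t x : ℝ) : ℝ := x ^ lam * Real.exp (-x ^ 2 - t / x)

/-- The system of monic orthogonal polynomials with respect to the weight
`w(x;t) = x^λ e^{-x² - t/x}` on `(0,∞)` (for every `t > 0`), together with the
normalization constants `h n t` and the recurrence coefficients `α n t`, `β n t`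
of the three-term recurrence `x Pₙ = Pₙ₊₁ + αₙ Pₙ + βₙ Pₙ₋₁`, `P₀ = 1`, `β₀ P₋₁ = 0`. -/
structure SingLaguerreOPS (lam : ℝ) : Type where
  P : ℕ → ℝ → Polynomial ℝ
  h : ℕ → ℝ → ℝ
  α : ℕ → ℝ → ℝ
  β : ℕ → ℝ → ℝ
  /-- all moments `∫₀^∞ x^k w(x;t) dx`, `k ∈ ℤ`, converge -/
  moments : ∀ (k : ℤ) (t : ℝ), 0 < t →
    IntegrableOn (fun x : ℝ => x ^ k * weight lam t x) (Set.Ioi (0:ℝ))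
  monic : ∀ n t, 0 < t → (P n t).Monic
  natDegree_eq : ∀ n t, 0 < t → (P n t).natDegree = n
  h_pos : ∀ n t, 0 < t → 0 < h n t
  orth : ∀ m n t, 0 < t →
    ∫ x in Set.Ioi (0:ℝ), (P m t).eval x * (P n t).eval x * weight lam t x
      = if m = n then h n t else 0
  P_zero : ∀ t, 0 < t → P 0 t = 1
  recur : ∀ n t, 0 < t →
    Polynomial.X * P n t
      = P (n+1) t + Polynomial.C (α n t) * P n t
        + Polynomial.C (β n t) * (if n = 0 then 0 else P (n-1) t)

/-- The auxiliary quantity `Rₙ(t) = (t/hₙ) ∫₀^∞ y⁻¹ Pₙ(y)² w(y;t) dy`. -/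
noncomputable def Rn (lam : ℝ) (S : SingLaguerreOPS lam) (n : ℕ) (t : ℝ) : ℝ :=
  t / S.h n t * ∫ y in Set.Ioi (0:ℝ), ((S.P n t).eval y) ^ 2 * weight lam t y / y

/-- The auxiliary quantity `rₙ(t) = (t/hₙ₋₁) ∫₀^∞ y⁻¹ Pₙ(y) Pₙ₋₁(y) w(y;t) dy`
(with the convention `P₋₁ = 0`, so `r₀ = 0`). -/
noncomputable def rn (lam : ℝ) (S : SingLaguerreOPS lam) (n : ℕ) (t : ℝ) : ℝ :=
  t / S.h (n-1) t *
    ∫ y in Set.Ioi (0:ℝ),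
      (S.P n t).eval y * (if n = 0 then 0 else (S.P (n-1) t).eval y) * weight lam t y / y

/-- The derivative `v'(z) = 2z - λ/z - t/z²` of the potential `v(z) = z² + t/z - λ ln z`. -/
noncomputable def vprime (lam t z : ℝ) : ℝ := 2 * z - lam / z - t / z ^ 2

/-! ### Auxiliary development -/

open Polynomial Finset Matrix

section Aux

lemma weight_pos (lam s : ℝ) {x : ℝ} (hx : 0 < x) : 0 < weight lam s x :=
  mul_pos (Real.rpow_pos_of_pos hx lam) (Real.exp_pos _)

lemma weight_contOn (lam s : ℝ) : ContinuousOn (weight lam s) (Set.Ioi 0) := by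
  unfold weight
  apply ContinuousOn.mul
  · exact continuousOn_id.rpow_const fun x hx => Or.inl (ne_of_gt hx)
  · exact (((continuousOn_id.pow 2).neg.sub
      (continuousOn_const.div continuousOn_id fun x hx => ne_of_gt hx)).rexp)

lemma zpow_contOn (k : ℤ) : ContinuousOn (fun x : ℝ => x ^ k) (Set.Ioi 0) := by
  intro x hx
  exact (continuousAt_zpow₀ x k (Or.inl (ne_of_gt hx))).continuousWithinAt

lemma meas1 (lam s : ℝ) (k : ℤ) :
    AEStronglyMeasurable (fun x : ℝ => x ^ k * weight lam s x)
      (volume.restrict (Set.Ioi 0)) :=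
  ((zpow_contOn k).mul (weight_contOn lam s)).aestronglyMeasurable measurableSet_Ioi

/-- The moments of the weight, as a function of `t`. -/
noncomputable def mu (lam : ℝ) (k : ℤ) (s : ℝ) : ℝ :=
  ∫ x in Set.Ioi (0:ℝ), x ^ k * weight lam s x

/-- The Gram (Hankel) matrix of moments. -/
noncomputable def gram (lam : ℝ) (n : ℕ) (s : ℝ) : Matrix (Fin n) (Fin n) ℝ :=
  fun i j => mu lam (((i:ℕ):ℤ) + ((j:ℕ):ℤ)) s

variable (lam : ℝ)
  (hmom : ∀ (k : ℤ) (s : ℝ), 0 < s →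
      IntegrableOn (fun x : ℝ => x ^ k * weight lam s x) (Set.Ioi (0:ℝ)))

include hmom in
lemma mu_hasDerivAt (k : ℤ) {t : ℝ} (ht : 0 < t) :
    HasDerivAt (mu lam k) (-(mu lam (k-1) t)) t := by
  have key := hasDerivAt_integral_of_dominated_loc_of_deriv_le (μ := volume.restrict (Set.Ioi 0))
    (F := fun s x => x ^ k * weight lam s x)
    (F' := fun s x => -(x ^ (k-1) * weight lam s x))
    (x₀ := t) (bound := fun x => x ^ (k-1) * weight lam (t/2) x)
    (Metric.ball_mem_nhds t (half_pos ht))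
    (Eventually.of_forall fun s => meas1 lam s k)
    (hmom k t ht)
    ((meas1 lam t (k-1)).neg)
    ?_ (hmom (k-1) (t/2) (half_pos ht)) ?_
  · have h2 := key.2
    rw [integral_neg] at h2
    exact h2
  · filter_upwards [ae_restrict_mem measurableSet_Ioi] with x hx s hs
    have hx0 : (0:ℝ) < x := hx
    have hs2 : t/2 < s := by
      rw [Metric.mem_ball, Real.dist_eq, abs_lt] at hs
      linarith [hs.1]
    have hw : weight lam s x ≤ weight lam (t/2) x := by
      unfold weight
      apply mul_le_mul_of_nonneg_left _ (Real.rpow_nonneg hx0.le lam)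
      apply Real.exp_le_exp.2
      have : (t/2)/x ≤ s/x := div_le_div_of_nonneg_right hs2.le hx0.le
      linarith
    rw [norm_neg, Real.norm_eq_abs, abs_of_nonneg
      (mul_nonneg (zpow_nonneg hx0.le _) (weight_pos lam s hx0).le)]
    exact mul_le_mul_of_nonneg_left hw (zpow_nonneg hx0.le _)
  · filter_upwards [ae_restrict_mem measurableSet_Ioi] with x hx s _
    have hx0 : (0:ℝ) < x := hx
    have h1 : HasDerivAt (fun y : ℝ => -x^2 - y/x) (-(1/x)) s :=
      HasDerivAt.const_sub (-x^2) ((hasDerivAt_id s).div_const x)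
    have h3 := (h1.exp.const_mul (x ^ lam)).const_mul (x ^ k)
    have heq : x ^ (k-1) = x ^ k * x⁻¹ := by
      rw [zpow_sub_one₀ (ne_of_gt hx0)]
    have hval : x ^ k * (x ^ lam * (Real.exp (-x^2 - s/x) * (-(1/x)))) =
        -(x ^ (k-1) * weight lam s x) := by
      unfold weight; rw [heq]; field_simp
    exact hval ▸ h3

omit hmom in
lemma eqOn_poly (q : Polynomial ℝ) (k : ℤ) (s : ℝ) :
    Set.EqOn (fun x : ℝ => ∑ i ∈ range (q.natDegree+1), q.coeff i * (x ^ ((i:ℤ)+k) * weight lam s x))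
      (fun x => q.eval x * x ^ k * weight lam s x) (Set.Ioi 0) := by
  intro x hx
  have hx0 : (0:ℝ) < x := hx
  simp only
  rw [Polynomial.eval_eq_sum_range, Finset.sum_mul, Finset.sum_mul]
  refine Finset.sum_congr rfl fun i _ => ?_
  rw [zpow_add₀ (ne_of_gt hx0), zpow_natCast]
  ring

include hmom in
lemma integrableOn_poly (q : Polynomial ℝ) (k : ℤ) {s : ℝ} (hs : 0 < s) :
    IntegrableOn (fun x : ℝ => q.eval x * x ^ k * weight lam s x) (Set.Ioi 0) := by
  refine IntegrableOn.congr_fun ?_ (eqOn_poly lam q k s) measurableSet_Ioi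
  exact integrable_finset_sum _ fun i _ => (hmom ((i:ℤ)+k) s hs).const_mul _

include hmom in
lemma expand1 (q : Polynomial ℝ) (k : ℤ) {s : ℝ} (hs : 0 < s) :
    ∫ x in Set.Ioi (0:ℝ), q.eval x * x ^ k * weight lam s x
      = ∑ i ∈ range (q.natDegree+1), q.coeff i * mu lam ((i:ℤ)+k) s := by
  rw [← setIntegral_congr_fun measurableSet_Ioi (eqOn_poly lam q k s),
    integral_finset_sum (range (q.natDegree+1))
      (fun (i : ℕ) (_ : i ∈ range (q.natDegree+1)) =>
        ((hmom ((i:ℤ)+k) s hs).const_mul (q.coeff i) :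
          Integrable (fun x : ℝ => q.coeff i * (x ^ ((i:ℤ)+k) * weight lam s x))
            (volume.restrict (Set.Ioi 0))))]
  simp only [integral_const_mul, mu]

include hmom in
lemma integrableOn_poly' (q : Polynomial ℝ) (j : ℕ) {s : ℝ} (hs : 0 < s) :
    IntegrableOn (fun x : ℝ => q.eval x * x ^ j * weight lam s x) (Set.Ioi 0) := by
  have := integrableOn_poly lam hmom q (j : ℤ) hs
  simpa [zpow_natCast] using this

include hmom in
lemma expand1' (q : Polynomial ℝ) (j : ℕ) {s : ℝ} (hs : 0 < s) :
    ∫ x in Set.Ioi (0:ℝ), q.eval x * x ^ j * weight lam s x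
      = ∑ i ∈ range (q.natDegree+1), q.coeff i * mu lam ((i:ℤ)+j) s := by
  rw [← expand1 lam hmom q (j:ℤ) hs]
  simp [zpow_natCast]

include hmom in
lemma split2 (p q : Polynomial ℝ) {s : ℝ} (hs : 0 < s) :
    ∫ x in Set.Ioi (0:ℝ), p.eval x * q.eval x * weight lam s x
      = ∑ i ∈ range (q.natDegree+1), q.coeff i *
          ∫ x in Set.Ioi (0:ℝ), p.eval x * x ^ i * weight lam s x := by
  have hfe : (fun x : ℝ => p.eval x * q.eval x * weight lam s x)
      = fun x => ∑ i ∈ range (q.natDegree+1), q.coeff i * (p.eval x * x ^ i * weight lam s x) := by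
    funext x
    rw [Polynomial.eval_eq_sum_range' (Nat.lt_succ_self q.natDegree) x,
      Finset.mul_sum, Finset.sum_mul]
    exact Finset.sum_congr rfl fun i _ => by ring
  rw [hfe, integral_finset_sum _ fun i _ => (integrableOn_poly' lam hmom p i hs).const_mul _]
  simp only [integral_const_mul]

include hmom in
lemma integrableOn_eval_mul (p q : Polynomial ℝ) {s : ℝ} (hs : 0 < s) :
    IntegrableOn (fun x : ℝ => p.eval x * q.eval x * weight lam s x) (Set.Ioi 0) := by
  have := integrableOn_poly' lam hmom (p*q) 0 hs
  simpa [Polynomial.eval_mul, mul_assoc] using this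

include hmom in
lemma expand_div (p q : Polynomial ℝ) {s : ℝ} (hs : 0 < s) :
    ∫ x in Set.Ioi (0:ℝ), p.eval x * q.eval x * weight lam s x / x
      = ∑ i ∈ range (p.natDegree+1), ∑ j ∈ range (q.natDegree+1),
          p.coeff i * q.coeff j * mu lam ((i:ℤ)+(j:ℤ)-1) s := by
  have hpt : Set.EqOn
      (fun x : ℝ => ∑ i ∈ range (p.natDegree+1), ∑ j ∈ range (q.natDegree+1),
        p.coeff i * q.coeff j * (x ^ ((i:ℤ)+(j:ℤ)-1) * weight lam s x))
      (fun x => p.eval x * q.eval x * weight lam s x / x) (Set.Ioi 0) := by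
    intro x hx
    have hx0 : (0:ℝ) < x := hx
    simp only
    rw [Polynomial.eval_eq_sum_range' (Nat.lt_succ_self p.natDegree) x,
      Polynomial.eval_eq_sum_range' (Nat.lt_succ_self q.natDegree) x,
      Finset.sum_mul_sum, Finset.sum_mul, Finset.sum_div]
    refine Finset.sum_congr rfl fun i _ => ?_
    rw [Finset.sum_mul, Finset.sum_div]
    refine Finset.sum_congr rfl fun j _ => ?_
    rw [zpow_sub_one₀ (ne_of_gt hx0), zpow_add₀ (ne_of_gt hx0), zpow_natCast, zpow_natCast]
    field_simp
  rw [← setIntegral_congr_fun measurableSet_Ioi hpt]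
  rw [integral_finset_sum _ (fun i _ => integrable_finset_sum _ (fun j _ =>
    ((hmom _ s hs).const_mul _)))]
  refine Finset.sum_congr rfl fun i _ => ?_
  rw [integral_finset_sum _ (fun j _ => ((hmom _ s hs).const_mul _))]
  exact Finset.sum_congr rfl fun j _ => by rw [integral_const_mul]; rfl

end Aux

section OPS

variable {lam : ℝ}

lemma X_pow_sub_P_natDegree_lt (S : SingLaguerreOPS lam) (j : ℕ) (hj : 0 < j) {s : ℝ}
    (hs : 0 < s) : ((Polynomial.X : Polynomial ℝ) ^ j - S.P j s).natDegree < j := by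
  set R := (Polynomial.X : Polynomial ℝ) ^ j - S.P j s with hR
  by_cases h0 : R = 0
  · simpa [h0] using hj
  · refine (Polynomial.natDegree_lt_iff_degree_lt (p := R) (n := j) h0).mpr ?_
    have hdeg : (S.P j s).degree = (j : WithBot ℕ) := by
      rw [Polynomial.degree_eq_natDegree (S.monic j s hs).ne_zero, S.natDegree_eq j s hs]
    have := Polynomial.degree_sub_lt (p := (Polynomial.X : Polynomial ℝ) ^ j) (q := S.P j s)
      (by simp [Polynomial.degree_X_pow, hdeg])
      (pow_ne_zero j (Polynomial.X_ne_zero (R := ℝ)))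
      (by simp [Polynomial.leadingCoeff_X_pow, (S.monic j s hs).leadingCoeff])
    rwa [Polynomial.degree_X_pow] at this

lemma mono_orth (S : SingLaguerreOPS lam) (m j : ℕ) (hj : j < m) {s : ℝ} (hs : 0 < s) :
    ∫ x in Set.Ioi (0:ℝ), (S.P m s).eval x * x ^ j * weight lam s x = 0 := by
  induction j using Nat.strong_induction_on with
  | _ j ih =>
    rcases Nat.eq_zero_or_pos j with h0 | hjpos
    · subst h0
      have horth := S.orth 0 m s hs
      rw [if_neg (by omega)] at horth
      refine Eq.trans ?_ horth
      congr 1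
      funext x
      simp [S.P_zero s hs, mul_comm]
    · set R := (Polynomial.X : Polynomial ℝ) ^ j - S.P j s with hRdef
      have hRd : R.natDegree < j := X_pow_sub_P_natDegree_lt S j hjpos hs
      have hpt : ∀ x : ℝ, (S.P m s).eval x * x ^ j * weight lam s x
          = (S.P m s).eval x * (S.P j s).eval x * weight lam s x
            + (S.P m s).eval x * R.eval x * weight lam s x := by
        intro x
        have : R.eval x = x ^ j - (S.P j s).eval x := by
          simp [hRdef]
        rw [this]; ring
      rw [show (fun x : ℝ => (S.P m s).eval x * x ^ j * weight lam s x) = _ from funext hpt]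
      rw [integral_add (integrableOn_eval_mul lam S.moments _ _ hs)
        (integrableOn_eval_mul lam S.moments _ _ hs)]
      have h1 : ∫ x in Set.Ioi (0:ℝ), (S.P m s).eval x * (S.P j s).eval x * weight lam s x
          = 0 := by
        have horth := S.orth j m s hs
        rw [if_neg (by omega)] at horth
        refine Eq.trans ?_ horth
        congr 1
        funext x
        ring
      have h2 : ∫ x in Set.Ioi (0:ℝ), (S.P m s).eval x * R.eval x * weight lam s x = 0 := by
        rw [split2 lam S.moments _ _ hs]
        refine Finset.sum_eq_zero fun i hi => ?_
        have hij : i < j := by simp only [Finset.mem_range] at hi; omega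
        rw [ih i hij (lt_trans hij hj)]
        ring
      rw [h1, h2, add_zero]

lemma poly_orth (S : SingLaguerreOPS lam) (m : ℕ) (q : Polynomial ℝ) (hq : q.natDegree < m)
    {s : ℝ} (hs : 0 < s) :
    ∫ x in Set.Ioi (0:ℝ), (S.P m s).eval x * q.eval x * weight lam s x = 0 := by
  rw [split2 lam S.moments _ _ hs]
  refine Finset.sum_eq_zero fun i hi => ?_
  rw [mono_orth S m i (by simp only [Finset.mem_range] at hi; omega) hs]
  ring

lemma self_moment (S : SingLaguerreOPS lam) (m : ℕ) {s : ℝ} (hs : 0 < s) :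
    ∫ x in Set.Ioi (0:ℝ), (S.P m s).eval x * x ^ m * weight lam s x = S.h m s := by
  set R := (Polynomial.X : Polynomial ℝ) ^ m - S.P m s with hRdef
  have hpt : ∀ x : ℝ, (S.P m s).eval x * x ^ m * weight lam s x
      = (S.P m s).eval x * (S.P m s).eval x * weight lam s x
        + (S.P m s).eval x * R.eval x * weight lam s x := by
    intro x
    have : R.eval x = x ^ m - (S.P m s).eval x := by simp [hRdef]
    rw [this]; ring
  rw [show (fun x : ℝ => (S.P m s).eval x * x ^ m * weight lam s x) = _ from funext hpt]
  rw [integral_add (integrableOn_eval_mul lam S.moments _ _ hs)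
    (integrableOn_eval_mul lam S.moments _ _ hs)]
  have h1 : ∫ x in Set.Ioi (0:ℝ), (S.P m s).eval x * (S.P m s).eval x * weight lam s x
      = S.h m s := by
    have horth := S.orth m m s hs
    rwa [if_pos rfl] at horth
  have h2 : ∫ x in Set.Ioi (0:ℝ), (S.P m s).eval x * R.eval x * weight lam s x = 0 := by
    rcases Nat.eq_zero_or_pos m with hm0 | hmpos
    · have : R = 0 := by
        rw [hRdef, hm0, S.P_zero s hs, pow_zero, sub_self]
      simp [this]
    · exact poly_orth S m R (X_pow_sub_P_natDegree_lt S m hmpos hs) hs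
  rw [h1, h2, add_zero]

end OPS

section Gram

variable (lam : ℝ)
  (hmom : ∀ (k : ℤ) (s : ℝ), 0 < s →
      IntegrableOn (fun x : ℝ => x ^ k * weight lam s x) (Set.Ioi (0:ℝ)))

-- positivity of ∫ q² w
include hmom in
lemma integral_sq_pos (q : Polynomial ℝ) (hq : q ≠ 0) {s : ℝ} (hs : 0 < s) :
    0 < ∫ x in Set.Ioi (0:ℝ), q.eval x * q.eval x * weight lam s x := by
  set f := fun x : ℝ => q.eval x * q.eval x * weight lam s x with hf
  have h1 : 0 ≤ᵐ[volume.restrict (Set.Ioi (0:ℝ))] f := by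
    filter_upwards [ae_restrict_mem measurableSet_Ioi] with x hx
    exact mul_nonneg (mul_self_nonneg _) (weight_pos lam s hx).le
  have h2 : IntegrableOn f (Set.Ioi (0:ℝ)) := integrableOn_eval_mul lam hmom q q hs
  rw [setIntegral_pos_iff_support_of_nonneg_ae h1 h2]
  have hsub : Set.Ioi (0:ℝ) \ {x | q.IsRoot x} ⊆ Function.support f ∩ Set.Ioi 0 := by
    rintro x ⟨hx1, hx2⟩
    refine ⟨?_, hx1⟩
    simp only [Function.mem_support, hf]
    have hqx : q.eval x ≠ 0 := hx2
    exact ne_of_gt (mul_pos (mul_self_pos.2 hqx) (weight_pos lam s hx1))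
  have hroots : volume {x : ℝ | q.IsRoot x} = 0 :=
    (Polynomial.finite_setOf_isRoot hq).measure_zero _
  have : volume (Set.Ioi (0:ℝ) \ {x | q.IsRoot x}) = volume (Set.Ioi (0:ℝ)) :=
    measure_diff_null hroots
  calc (0:ENNReal) < volume (Set.Ioi (0:ℝ)) := by rw [Real.volume_Ioi]; exact ENNReal.zero_lt_top
  _ = volume (Set.Ioi (0:ℝ) \ {x | q.IsRoot x}) := this.symm
  _ ≤ volume (Function.support f ∩ Set.Ioi 0) := measure_mono hsub

include hmom in
lemma gram_posdef (n : ℕ) {s : ℝ} (hs : 0 < s) : (gram lam n s).PosDef := by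
  refine Matrix.posDef_iff_dotProduct_mulVec.2 ⟨?_, ?_⟩
  · ext i j
    simp [Matrix.IsHermitian, _root_.gram, Matrix.conjTranspose_apply, add_comm]
  · intro v hv
    set qv : Polynomial ℝ := ∑ i : Fin n, Polynomial.C (v i) * Polynomial.X ^ (i:ℕ) with hqv
    have hcoeff : ∀ i : Fin n, qv.coeff (i:ℕ) = v i := by
      intro i
      rw [hqv, Polynomial.finset_sum_coeff]
      rw [Finset.sum_eq_single i]
      · simp
      · intro j _ hji
        simp only [Polynomial.coeff_C_mul, Polynomial.coeff_X_pow]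
        rw [if_neg (by simpa [Fin.val_eq_val] using (Ne.symm hji))]
        ring
      · simp
    have hqv0 : qv ≠ 0 := by
      obtain ⟨i, hi⟩ := Function.ne_iff.1 hv
      intro h
      apply hi
      rw [← hcoeff i, h, Polynomial.coeff_zero]
      simp
    have heval : ∀ x : ℝ, qv.eval x = ∑ i : Fin n, v i * x ^ (i:ℕ) := by
      intro x; simp [hqv, Polynomial.eval_finset_sum]
    have hquad : star v ⬝ᵥ ((gram lam n s) *ᵥ v)
        = ∫ x in Set.Ioi (0:ℝ), qv.eval x * qv.eval x * weight lam s x := by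
      have hptwise : Set.EqOn
          (fun x : ℝ => ∑ i : Fin n, ∑ j : Fin n,
            v i * v j * (x ^ (((i:ℕ):ℤ) + ((j:ℕ):ℤ)) * weight lam s x))
          (fun x => qv.eval x * qv.eval x * weight lam s x) (Set.Ioi 0) := by
        intro x hx
        have hx0 : (0:ℝ) < x := hx
        simp only [heval]
        rw [Finset.sum_mul_sum]
        rw [Finset.sum_mul]
        refine Finset.sum_congr rfl fun i _ => ?_
        rw [Finset.sum_mul]
        refine Finset.sum_congr rfl fun j _ => ?_
        rw [zpow_add₀ (ne_of_gt hx0), zpow_natCast, zpow_natCast]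
        ring
      rw [← setIntegral_congr_fun measurableSet_Ioi hptwise]
      rw [integral_finset_sum _ (fun i _ => integrable_finset_sum _ (fun j _ =>
        ((hmom _ s hs).const_mul _)))]
      have : ∀ i : Fin n, ∫ x in Set.Ioi (0:ℝ), (∑ j : Fin n,
          v i * v j * (x ^ (((i:ℕ):ℤ) + ((j:ℕ):ℤ)) * weight lam s x))
          = ∑ j : Fin n, v i * v j * mu lam (((i:ℕ):ℤ) + ((j:ℕ):ℤ)) s := by
        intro i
        rw [integral_finset_sum _ (fun j _ => ((hmom _ s hs).const_mul _))]
        exact Finset.sum_congr rfl fun j _ => by rw [integral_const_mul]; rfl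
      rw [Finset.sum_congr rfl fun i _ => this i]
      simp only [dotProduct, Matrix.mulVec, _root_.gram, star_trivial]
      rw [Finset.sum_congr rfl (fun i (_ : i ∈ Finset.univ) => Finset.mul_sum _ _ (v i))]
      refine Finset.sum_congr rfl fun i _ => Finset.sum_congr rfl fun j _ => by ring
    rw [show star v ⬝ᵥ ((gram lam n s) *ᵥ v) = _ from hquad]
    exact integral_sq_pos lam hmom qv hqv0 hs

include hmom in
lemma gram_det_ne (n : ℕ) {s : ℝ} (hs : 0 < s) : (gram lam n s).det ≠ 0 :=
  ne_of_gt (gram_posdef lam hmom n hs).det_pos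

-- generic: determinant of a matrix of differentiable functions is differentiable
lemma det_diffAt {m : ℕ} {t : ℝ} (M : ℝ → Matrix (Fin m) (Fin m) ℝ)
    (hM : ∀ i j, DifferentiableAt ℝ (fun s => M s i j) t) :
    DifferentiableAt ℝ (fun s => (M s).det) t := by
  have hfe : (fun s => (M s).det) = fun s =>
      ∑ σ : Equiv.Perm (Fin m), ((Equiv.Perm.sign σ : ℤ) : ℝ) * ∏ i, M s (σ i) i :=
    funext fun s => by rw [Matrix.det_apply']
  rw [hfe]
  exact DifferentiableAt.fun_sum fun σ _ =>
    (DifferentiableAt.fun_finsetProd (fun i _ => hM (σ i) i)).const_mul _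

lemma adjugate_diffAt {m : ℕ} {t : ℝ} (M : ℝ → Matrix (Fin m) (Fin m) ℝ)
    (hM : ∀ i j, DifferentiableAt ℝ (fun s => M s i j) t) (i j : Fin m) :
    DifferentiableAt ℝ (fun s => (M s).adjugate i j) t := by
  have hfe : (fun s => (M s).adjugate i j)
      = fun s => ((M s).updateRow j (Pi.single i 1)).det :=
    funext fun s => by rw [Matrix.adjugate_apply]
  rw [hfe]
  refine det_diffAt _ fun k l => ?_
  by_cases hk : k = j
  · subst hk
    simp only [Matrix.updateRow_self]
    exact differentiableAt_const _
  · simp only [Matrix.updateRow_ne hk]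
    exact hM k l

end Gram

section Coeff

variable (lam : ℝ)

lemma coeff_system (S : SingLaguerreOPS lam) (n : ℕ) {s : ℝ} (hs : 0 < s) :
    (gram lam n s) *ᵥ (fun i : Fin n => (S.P n s).coeff i)
      = fun j : Fin n => -(mu lam ((n:ℤ) + ((j:ℕ):ℤ)) s) := by
  funext j
  have h0 : ∫ x in Set.Ioi (0:ℝ), (S.P n s).eval x * x ^ (j:ℕ) * weight lam s x = 0 :=
    mono_orth S n j j.isLt hs
  rw [expand1' lam S.moments _ _ hs, S.natDegree_eq n s hs, Finset.sum_range_succ] at h0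
  have hlead : (S.P n s).coeff n = 1 := by
    have := (S.monic n s hs).coeff_natDegree
    rwa [S.natDegree_eq n s hs] at this
  rw [hlead, one_mul] at h0
  have hfin : ∑ i ∈ range n, (S.P n s).coeff i * mu lam ((i:ℤ)+(j:ℕ)) s
      = ∑ i : Fin n, (S.P n s).coeff i * mu lam (((i:ℕ):ℤ)+((j:ℕ):ℤ)) s := by
    rw [← Fin.sum_univ_eq_sum_range]
  rw [hfin] at h0
  simp only [Matrix.mulVec, dotProduct, _root_.gram]
  have : ∑ i : Fin n, mu lam (((j:ℕ):ℤ) + ((i:ℕ):ℤ)) s * (S.P n s).coeff i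
      = ∑ i : Fin n, (S.P n s).coeff i * mu lam (((i:ℕ):ℤ)+((j:ℕ):ℤ)) s := by
    refine Finset.sum_congr rfl fun i _ => ?_
    rw [add_comm (((j:ℕ):ℤ)) (((i:ℕ):ℤ))]
    ring
  rw [this]
  linarith [h0]

lemma coeff_eq_cramer (S : SingLaguerreOPS lam) (n : ℕ) {s : ℝ} (hs : 0 < s) (i : Fin n) :
    (S.P n s).coeff i = (gram lam n s).det⁻¹ *
      ∑ j : Fin n, (gram lam n s).adjugate i j * (-(mu lam ((n:ℤ) + ((j:ℕ):ℤ)) s)) := by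
  have hsys := coeff_system lam S n hs
  have h1 : (gram lam n s).adjugate *ᵥ ((gram lam n s) *ᵥ (fun i : Fin n => (S.P n s).coeff i))
      = (gram lam n s).det • (fun i : Fin n => (S.P n s).coeff i) := by
    rw [Matrix.mulVec_mulVec, Matrix.adjugate_mul, Matrix.smul_mulVec, Matrix.one_mulVec]
  rw [hsys] at h1
  have h2 := congrFun h1.symm i
  simp only [Pi.smul_apply, smul_eq_mul, Matrix.mulVec, dotProduct] at h2
  have hdet := gram_det_ne lam S.moments n hs
  field_simp at h2 ⊢
  linarith [h2]

lemma coeff_diffAt (S : SingLaguerreOPS lam) (n : ℕ) {t : ℝ} (ht : 0 < t) (i : Fin n) :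
    DifferentiableAt ℝ (fun s => (S.P n s).coeff i) t := by
  have hGd : ∀ k l : Fin n, DifferentiableAt ℝ (fun s => gram lam n s k l) t := fun k l =>
    (mu_hasDerivAt lam S.moments _ ht).differentiableAt
  have hdet := det_diffAt (fun s => gram lam n s) hGd
  have hE : DifferentiableAt ℝ (fun s => (gram lam n s).det⁻¹ *
      ∑ j : Fin n, (gram lam n s).adjugate i j * (-(mu lam ((n:ℤ) + ((j:ℕ):ℤ)) s))) t := by
    refine DifferentiableAt.mul (hdet.inv (gram_det_ne lam S.moments n ht)) ?_
    exact DifferentiableAt.fun_sum fun j _ => (adjugate_diffAt _ hGd i j).mul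
      (mu_hasDerivAt lam S.moments _ ht).differentiableAt.neg
  refine hE.congr_of_eventuallyEq ?_
  filter_upwards [Ioi_mem_nhds ht] with s hs
  exact coeff_eq_cramer lam S n hs i

end Coeff

theorem statement15 (lam t : ℝ) (hlam : 0 ≤ lam) (ht : 0 < t)
    (S : SingLaguerreOPS lam) (n : ℕ) (hn : 1 ≤ n) :
    ∃ d : ℝ, HasDerivAt (fun s => (S.P n s).coeff (n-1)) d t ∧ t * d = rn lam S n t := by
  obtain ⟨m, rfl⟩ : ∃ m, n = m + 1 := ⟨n-1, by omega⟩
  have hQdeg : (S.P m t).natDegree = m := S.natDegree_eq m t ht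
  -- the coefficient functions are differentiable at t
  have hdiff : ∀ i : ℕ, i < m + 1 → DifferentiableAt ℝ (fun s => (S.P (m+1) s).coeff i) t :=
    fun i hi => coeff_diffAt lam S (m+1) ht ⟨i, hi⟩
  set D : ℕ → ℝ := fun i => deriv (fun s => (S.P (m+1) s).coeff i) t with hD
  have hgd : ∀ i : ℕ, i < m + 1 → HasDerivAt (fun s => (S.P (m+1) s).coeff i) (D i) t :=
    fun i hi => (hdiff i hi).hasDerivAt
  have hgn : HasDerivAt (fun s => (S.P (m+1) s).coeff (m+1)) 0 t := by
    refine (hasDerivAt_const t (1:ℝ)).congr_of_eventuallyEq ?_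
    filter_upwards [Ioi_mem_nhds ht] with s hs
    have hmon := (S.monic (m+1) s hs).coeff_natDegree
    rwa [S.natDegree_eq (m+1) s hs] at hmon
  have hDn : D (m+1) = 0 := hgn.deriv
  have hgall : ∀ i ∈ Finset.range (m+2), HasDerivAt (fun s => (S.P (m+1) s).coeff i) (D i) t := by
    intro i hi
    simp only [Finset.mem_range] at hi
    rcases Nat.lt_or_ge i (m+1) with h | h
    · exact hgd i h
    · have hieq : i = m + 1 := by omega
      subst hieq
      exact hDn ▸ hgn
  -- the function Φ(s) = ∫ Pₙ(x;s) Pₙ₋₁(x;t) w(x;s) dx, written via moments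
  have hΦderiv : HasDerivAt (fun s => ∑ i ∈ Finset.range (m+2), ∑ j ∈ Finset.range (m+1),
      (S.P (m+1) s).coeff i * (S.P m t).coeff j * mu lam ((i:ℤ)+(j:ℤ)) s)
      (∑ i ∈ Finset.range (m+2), ∑ j ∈ Finset.range (m+1),
        (D i * (S.P m t).coeff j * mu lam ((i:ℤ)+(j:ℤ)) t
          + (S.P (m+1) t).coeff i * (S.P m t).coeff j * (-(mu lam ((i:ℤ)+(j:ℤ)-1) t)))) t := by
    apply HasDerivAt.fun_sum
    intro i hi
    apply HasDerivAt.fun_sum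
    intro j _
    have h2 : HasDerivAt (fun s => mu lam ((i:ℤ)+(j:ℤ)) s) (-(mu lam ((i:ℤ)+(j:ℤ)-1) t)) t :=
      mu_hasDerivAt lam S.moments _ ht
    exact ((hgall i hi).mul_const ((S.P m t).coeff j)).mul h2
  have hΦzero : HasDerivAt (fun s => ∑ i ∈ Finset.range (m+2), ∑ j ∈ Finset.range (m+1),
      (S.P (m+1) s).coeff i * (S.P m t).coeff j * mu lam ((i:ℤ)+(j:ℤ)) s) 0 t := by
    refine (hasDerivAt_const t (0:ℝ)).congr_of_eventuallyEq ?_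
    filter_upwards [Ioi_mem_nhds ht] with s hs
    have hs0 : (0:ℝ) < s := hs
    rw [Finset.sum_comm]
    refine Finset.sum_eq_zero fun j hj => ?_
    have hj' : j < m + 1 := Finset.mem_range.mp hj
    have hint := mono_orth S (m+1) j hj' hs0
    rw [expand1' lam S.moments _ _ hs0, S.natDegree_eq (m+1) s hs0] at hint
    calc ∑ i ∈ Finset.range (m+2),
          (S.P (m+1) s).coeff i * (S.P m t).coeff j * mu lam ((i:ℤ)+(j:ℤ)) s
        = (∑ i ∈ Finset.range (m+1+1), (S.P (m+1) s).coeff i * mu lam ((i:ℤ)+(j:ℤ)) s)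
            * (S.P m t).coeff j := by
          rw [Finset.sum_mul]
          exact Finset.sum_congr rfl fun i _ => by ring
      _ = 0 := by rw [hint, zero_mul]
  have hkey := hΦderiv.unique hΦzero
  rw [Finset.sum_congr rfl (fun i _ => Finset.sum_add_distrib), Finset.sum_add_distrib] at hkey
  -- evaluate the first double sum
  have hA : ∀ i : ℕ, ∑ j ∈ Finset.range (m+1), (S.P m t).coeff j * mu lam ((i:ℤ)+(j:ℤ)) t
      = ∫ x in Set.Ioi (0:ℝ), (S.P m t).eval x * x ^ i * weight lam t x := by
    intro i
    rw [expand1' lam S.moments (S.P m t) i ht, hQdeg]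
    exact Finset.sum_congr rfl fun j _ => by rw [add_comm ((j:ℤ)) ((i:ℤ))]
  have hE1 : ∑ i ∈ Finset.range (m+2), ∑ j ∈ Finset.range (m+1),
      D i * (S.P m t).coeff j * mu lam ((i:ℤ)+(j:ℤ)) t = D m * S.h m t := by
    have hterm : ∀ i ∈ Finset.range (m+2),
        ∑ j ∈ Finset.range (m+1), D i * (S.P m t).coeff j * mu lam ((i:ℤ)+(j:ℤ)) t
        = D i * ∫ x in Set.Ioi (0:ℝ), (S.P m t).eval x * x ^ i * weight lam t x := by
      intro i _
      rw [← hA i, Finset.mul_sum]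
      exact Finset.sum_congr rfl fun j _ => by ring
    rw [Finset.sum_congr rfl hterm,
      show m + 2 = (m + 1) + 1 from rfl, Finset.sum_range_succ, Finset.sum_range_succ]
    have hzero : ∑ i ∈ Finset.range m,
        D i * ∫ x in Set.Ioi (0:ℝ), (S.P m t).eval x * x^i * weight lam t x = 0 :=
      Finset.sum_eq_zero fun i hi => by
        rw [mono_orth S m i (Finset.mem_range.mp hi) ht, mul_zero]
    rw [hzero, zero_add, self_moment S m ht, hDn, zero_mul, add_zero]
  -- evaluate the second double sum
  have hE2 : ∑ i ∈ Finset.range (m+2), ∑ j ∈ Finset.range (m+1),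
      (S.P (m+1) t).coeff i * (S.P m t).coeff j * (-(mu lam ((i:ℤ)+(j:ℤ)-1) t))
      = -∫ x in Set.Ioi (0:ℝ),
          (S.P (m+1) t).eval x * (S.P m t).eval x * weight lam t x / x := by
    rw [expand_div lam S.moments (S.P (m+1) t) (S.P m t) ht,
      S.natDegree_eq (m+1) t ht, hQdeg, ← Finset.sum_neg_distrib]
    refine Finset.sum_congr rfl fun i _ => ?_
    rw [← Finset.sum_neg_distrib]
    exact Finset.sum_congr rfl fun j _ => by ring
  rw [hE1, hE2] at hkey
  -- conclude
  have hh := (S.h_pos m t ht).ne'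
  set I : ℝ := ∫ x in Set.Ioi (0:ℝ),
    (S.P (m+1) t).eval x * (S.P m t).eval x * weight lam t x / x with hI
  have hDm : D m = I / S.h m t := by
    rw [eq_div_iff hh]
    linarith [hkey]
  refine ⟨D m, hgd m (Nat.lt_succ_self m), ?_⟩
  rw [hDm]
  unfold rn
  simp only [Nat.add_sub_cancel, Nat.succ_ne_zero, if_false]
  rw [← hI]
  ring
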